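/- For every n ≥ 0, pₙ = P̂ₙ(v, v² − 4w) in ℚ[v,w]. (Informally: the dispersionless Toda Hamiltonian density p₀(n) equals (v² − 4qe^u)^{n/2}·Pₙ(v/(v² − 4qe^u)^{1/2}).) -/

import Mathlib

/- STATEMENT 8.
Context: S = ℚ[v,w]; pₙ ∈ S is the coefficient of Λ⁰ in (Λ + v + wΛ⁻¹)ⁿ.
Pₙ ∈ ℚ[x] are the Legendre polynomials (P₀ = 1, P₁ = x,
(n+2)Pₙ₊₂ = (2n+3)x·Pₙ₊₁ − (n+1)Pₙ), and P̂ₙ ∈ ℚ[x,y] is the unique polynomial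
with P̂ₙ(x,y²) = yⁿPₙ(x/y), i.e. P̂ₙ(x,y²) = Σ_k (Pₙ)_k x^k y^(n−k).
Claim: pₙ = P̂ₙ(v, v² − 4w). -/

noncomputable section

/-- `S = ℚ[v,w]`, with `v = X 0` and `w = X 1`. -/
abbrev S : Type := MvPolynomial (Fin 2) ℚ

/-- The Laurent polynomial ring `S[Λ,Λ⁻¹]`. -/
abbrev LP : Type := AddMonoidAlgebra S ℤ

/-- Coefficient extraction from a Laurent polynomial. -/
def cf (x : LP) (n : ℤ) : S := x.coeff n

/-- the variable `v`. -/
def v : S := MvPolynomial.X 0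

/-- the variable `w`. -/
def w : S := MvPolynomial.X 1

/-- `Λ + v + wΛ⁻¹ ∈ S[Λ,Λ⁻¹]`. -/
def LL : LP :=
  AddMonoidAlgebra.single 1 1 + AddMonoidAlgebra.single 0 v +
    AddMonoidAlgebra.single (-1) w

/-- `pₙ` = coefficient of `Λ⁰` in `(Λ + v + wΛ⁻¹)ⁿ`. -/
def p (n : ℕ) : S := cf (LL ^ n) 0

/-- The Legendre polynomials, defined by the three-term recurrence
`P₀ = 1`, `P₁ = x`, `(n+2)·Pₙ₊₂(x) = (2(n+1)+1)·x·Pₙ₊₁(x) − (n+1)·Pₙ(x)`. -/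
def Leg : ℕ → Polynomial ℚ
  | 0 => 1
  | 1 => Polynomial.X
  | (n + 2) =>
      Polynomial.C (((n : ℚ) + 2)⁻¹) *
        ((2 * (n : ℚ) + 3) • (Polynomial.X * Leg (n + 1)) - ((n : ℚ) + 1) • Leg n)

/-- The two-variable homogenization `yⁿ·Pₙ(x/y) = Σ_{k ≤ n} (Pₙ)_k xᵏ yⁿ⁻ᵏ ∈ ℚ[x,y]`. -/
def homog (n : ℕ) : MvPolynomial (Fin 2) ℚ :=
  ∑ k ∈ Finset.range (n + 1),
    MvPolynomial.C ((Leg n).coeff k) * MvPolynomial.X 0 ^ k * MvPolynomial.X 1 ^ (n - k)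

open AddMonoidAlgebra Finsupp

lemma cf_add (x y : LP) (k : ℤ) : cf (x + y) k = cf x k + cf y k := Finsupp.add_apply x.coeff y.coeff k

lemma cf_smul (n : ℕ) (x : LP) (k : ℤ) : cf (n • x) k = n • cf x k := Finsupp.smul_apply n x.coeff k

lemma cf_single (a : ℤ) (c : S) (k : ℤ) : cf (AddMonoidAlgebra.single a c) k
    = if a = k then c else 0 := by
  simp only [cf, AddMonoidAlgebra.coeff_single]; exact Finsupp.single_apply

lemma R1 (n : ℕ) (k : ℤ) : cf (LL ^ (n+1)) k
    = cf (LL ^ n) (k - 1) + v * cf (LL ^ n) k + w * cf (LL ^ n) (k + 1) := by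
  have : LL ^ (n+1) = LL * LL ^ n := by ring
  rw [this, LL, add_mul, add_mul]
  show (_ + _ + _ : LP).coeff k = _
  rw [AddMonoidAlgebra.coeff_add, AddMonoidAlgebra.coeff_add, Finsupp.add_apply, Finsupp.add_apply, AddMonoidAlgebra.coeff_single_mul_apply,
    AddMonoidAlgebra.coeff_single_mul_apply, AddMonoidAlgebra.coeff_single_mul_apply]
  simp [cf, sub_eq_add_neg]
  ring_nf

lemma cf_one (k : ℤ) : cf (1 : LP) k = if k = 0 then 1 else 0 := by
  show cf (AddMonoidAlgebra.single 0 1) k = _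
  rw [cf_single]
  simp [eq_comm]

lemma cfsym (n : ℕ) : ∀ k : ℕ, cf (LL ^ n) (-(k:ℤ)) = w ^ k * cf (LL ^ n) k := by
  induction n with
  | zero =>
    intro k
    simp only [pow_zero, cf_one]
    cases k with
    | zero => simp
    | succ k => rw [if_neg (by omega), if_neg (by omega), mul_zero]
  | succ n ih =>
    intro k
    cases k with
    | zero => simp
    | succ k =>
      have h1 := R1 n (-((k:ℤ)+1))
      have h2 := R1 n ((k:ℤ)+1)
      have e1 : (-(((k:ℤ))+1) - 1) = -(((k+2:ℕ):ℤ)) := by push_cast; ring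
      have e2 : (-(((k:ℤ))+1) + 1) = -(((k:ℕ):ℤ)) := by push_cast; ring
      rw [e1, e2] at h1
      have e3 : (-(((k:ℤ))+1)) = -(((k+1:ℕ)):ℤ) := by push_cast; ring
      rw [e3] at h1
      rw [ih (k+2), ih k, ih (k+1)] at h1
      rw [h1]
      have e4 : (((k+1:ℕ)):ℤ) = (k:ℤ)+1 := by push_cast; ring
      rw [e4, h2]
      have e5 : ((k:ℤ)+1-1) = ((k:ℕ):ℤ) := by push_cast; ring
      have e6 : ((k:ℤ)+1+1) = ((k+2:ℕ):ℤ) := by push_cast; ring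
      rw [e5, e6]
      ring

/-- The Euler derivation `Λ d/dΛ` on `LP`. -/
def D (f : LP) : LP := AddMonoidAlgebra.ofCoeff (Finsupp.onFinset f.coeff.support (fun k => k • f.coeff k)
  (fun k h => by
    by_contra hk
    exact h (show k • f.coeff k = 0 by rw [Finsupp.notMem_support_iff.mp hk, smul_zero])))

lemma D_apply (f : LP) (k : ℤ) : (D f).coeff k = k • f.coeff k := rfl

lemma cf_D (f : LP) (k : ℤ) : cf (D f) k = k • cf f k := rfl

lemma D_add (f g : LP) : D (f + g) = D f + D g :=
  AddMonoidAlgebra.ext <| Finsupp.ext fun k => by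
    rw [D_apply, AddMonoidAlgebra.coeff_add, Finsupp.add_apply, AddMonoidAlgebra.coeff_add, Finsupp.add_apply, D_apply, D_apply, smul_add]

lemma D_smul (r : S) (f : LP) : D (r • f) = r • D f :=
  AddMonoidAlgebra.ext <| Finsupp.ext fun k => by
    rw [D_apply, AddMonoidAlgebra.coeff_smul, Finsupp.smul_apply, AddMonoidAlgebra.coeff_smul, Finsupp.smul_apply, D_apply, smul_comm]

lemma D_single (a : ℤ) (c : S) :
    D (AddMonoidAlgebra.single a c) = AddMonoidAlgebra.single a (a • c) :=
  AddMonoidAlgebra.ext <| Finsupp.ext fun k => by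
    rw [D_apply]
    show k • (Finsupp.single a c) k = (Finsupp.single a (a • c)) k
    rw [Finsupp.single_apply, Finsupp.single_apply]
    rcases eq_or_ne a k with rfl | h
    · simp
    · simp [h]

lemma D_mul (f g : LP) : D (f * g) = D f * g + f * D g := by
  induction f using AddMonoidAlgebra.induction_on with
  | smul r f ihf =>
    rw [smul_mul_assoc, D_smul, D_smul, ihf, smul_add, smul_mul_assoc, smul_mul_assoc]
  | add f f' ihf ihf' =>
    rw [add_mul, D_add, ihf, ihf', D_add, add_mul, add_mul]
    abel
  | of a =>
    induction g using AddMonoidAlgebra.induction_on with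
    | smul r g ihg =>
      rw [mul_smul_comm, D_smul, D_smul, ihg, smul_add, ← mul_smul_comm, ← mul_smul_comm]
    | add g g' ihg ihg' =>
      rw [mul_add, D_add, ihg, ihg', D_add, mul_add, mul_add]
      abel
    | of b =>
      show D (AddMonoidAlgebra.single a 1 * AddMonoidAlgebra.single b 1)
        = D (AddMonoidAlgebra.single a 1) * AddMonoidAlgebra.single b 1
          + AddMonoidAlgebra.single a 1 * D (AddMonoidAlgebra.single b 1)
      rw [AddMonoidAlgebra.single_mul_single, D_single, D_single, D_single,
        AddMonoidAlgebra.single_mul_single, AddMonoidAlgebra.single_mul_single,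
        ← AddMonoidAlgebra.single_add]
      congr 1
      simp [add_smul]

lemma D_pow (n : ℕ) : D (LL ^ (n + 1)) = (n + 1) • (LL ^ n * D LL) := by
  induction n with
  | zero => simp [D_mul]
  | succ n ih =>
    have h2 : LL ^ (n + 2) = LL ^ (n+1) * LL := by ring
    rw [h2, D_mul, ih, smul_mul_assoc,
      show (LL ^ n * D LL) * LL = LL ^ (n+1) * D LL by ring]
    exact (succ_nsmul (LL ^ (n+1) * D LL) (n+1)).symm

lemma D_LL : D LL = AddMonoidAlgebra.single 1 1 + AddMonoidAlgebra.single (-1) (-w) := by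
  rw [LL, D_add, D_add, D_single, D_single, D_single]
  simp

/-- `bₙ` = coefficient of `Λ¹`. -/
def b (n : ℕ) : S := cf (LL ^ n) 1

lemma E1 (n : ℕ) : p (n + 1) = w * b n + v * p n + w * b n := by
  have h := R1 n 0
  have hs := cfsym n 1
  simp only [Nat.cast_one, pow_one] at hs
  rw [p, h, show (0:ℤ) - 1 = -(1:ℤ) by ring, hs]
  rw [show (0:ℤ) + 1 = (1:ℤ) by ring]
  show _ = w * cf (LL^n) 1 + v * p n + w * cf (LL^n) 1
  rw [p]

lemma E2 (n : ℕ) : b (n + 1) = p n + v * b n + w * cf (LL ^ n) 2 := by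
  have h := R1 n 1
  rw [b, h]
  norm_num
  rfl

lemma cf_nsmul (m : ℕ) (x : LP) (k : ℤ) : cf (m • x) k = m • cf x k :=
  Finsupp.smul_apply m x.coeff k

lemma E3 (n : ℕ) : b (n + 1) = (n + 1) • (p n - w * cf (LL ^ n) 2) := by
  have h := congrArg (fun x : LP => cf x 1) (D_pow n)
  rw [cf_D, cf_nsmul] at h
  have hL : cf (LL ^ n * D LL) 1 = p n - w * cf (LL ^ n) 2 := by
    rw [D_LL, mul_add]
    show cf (_ + _ : LP) 1 = _
    rw [cf_add]
    simp only [cf]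
    rw [AddMonoidAlgebra.coeff_mul_single_apply, AddMonoidAlgebra.coeff_mul_single_apply,
      show (1:ℤ)+ -1 = 0 by ring, show (1:ℤ)+ - -1 = 2 by ring]
    show cf (LL^n) 0 * 1 + cf (LL^n) 2 * (-w) = p n - w * cf (LL^n) 2
    rw [p]
    ring
  rw [hL] at h
  rw [← h, one_smul, b]

lemma Grec (n : ℕ) : ((n : S) + 2) * p (n + 2)
    = (2 * (n : S) + 3) * (v * p (n + 1)) - ((n : S) + 1) * ((v ^ 2 - 4 * w) * p n) := by
  have e1 := E1 n
  have e11 := E1 (n + 1)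
  have e2 := E2 n
  have e3 := E3 n
  rw [nsmul_eq_mul] at e3
  push_cast at e3
  set P0 := p n
  set P1 := p (n + 1)
  set P2 := p (n + 2)
  set B0 := b n
  set B1 := b (n + 1)
  set C := cf (LL ^ n) 2
  set N := (n : S)
  linear_combination (N + 2) * e11 + 2 * w * (N + 1) * e2 + 2 * w * e3 - (N + 1) * v * e1

lemma p_zero : p 0 = 1 := by
  rw [p, pow_zero, cf_one]; simp

lemma p_one : p 1 = v := by
  rw [p, pow_one, LL, cf_add, cf_add, cf_single, cf_single, cf_single]
  norm_num

lemma Leg_natDegree (n : ℕ) : (Leg n).natDegree ≤ n := by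
  induction n using Nat.strong_induction_on with
  | _ n ih =>
    match n with
    | 0 => simp [Leg]
    | 1 => simp [Leg]
    | (n + 2) =>
      rw [Leg]
      refine le_trans (Polynomial.natDegree_mul_le) ?_
      refine le_trans (Nat.add_le_add_left (Polynomial.natDegree_sub_le _ _) _) ?_
      have h1 : (Polynomial.X * Leg (n + 1)).natDegree ≤ n + 2 := by
        refine le_trans (Polynomial.natDegree_mul_le) ?_
        have := ih (n + 1) (by omega)
        simpa [Polynomial.natDegree_X] using by omega
      have h2 : ((2 * (n : ℚ) + 3) • (Polynomial.X * Leg (n + 1))).natDegree ≤ n + 2 :=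
        le_trans (Polynomial.natDegree_smul_le _ _) h1
      have h3 : (((n : ℚ) + 1) • Leg n).natDegree ≤ n + 2 :=
        le_trans (Polynomial.natDegree_smul_le _ _) (le_trans (ih n (by omega)) (by omega))
      simp [Polynomial.natDegree_C, max_le h2 h3]

/-- generic homogenization at degree `m`. -/
def H (m : ℕ) (P : Polynomial ℚ) : S :=
  ∑ k ∈ Finset.range (m + 1),
    MvPolynomial.C (P.coeff k) * MvPolynomial.X 0 ^ k * MvPolynomial.X 1 ^ (m - k)

lemma homog_eq (n : ℕ) : homog n = H n (Leg n) := rfl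

lemma H_smul (m : ℕ) (c : ℚ) (P : Polynomial ℚ) : H m (c • P) = MvPolynomial.C c * H m P := by
  rw [H, H, Finset.mul_sum]
  refine Finset.sum_congr rfl fun k _ => ?_
  rw [Polynomial.coeff_smul, smul_eq_mul, map_mul]
  ring

lemma H_sub (m : ℕ) (P Q : Polynomial ℚ) : H m (P - Q) = H m P - H m Q := by
  rw [H, H, H, ← Finset.sum_sub_distrib]
  refine Finset.sum_congr rfl fun k _ => ?_
  rw [Polynomial.coeff_sub, map_sub]
  ring

lemma H_X_mul (m : ℕ) (P : Polynomial ℚ) :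
    H (m + 1) (Polynomial.X * P) = MvPolynomial.X 0 * H m P := by
  rw [H, H, Finset.sum_range_succ', Finset.mul_sum]
  have h0 : (Polynomial.X * P).coeff 0 = 0 := by
    rw [mul_comm, Polynomial.coeff_mul_X_zero]
  rw [h0]
  simp only [map_zero, zero_mul, add_zero]
  refine Finset.sum_congr rfl fun k _ => ?_
  rw [Polynomial.coeff_X_mul]
  have : m + 1 - (k + 1) = m - k := by omega
  rw [this]
  ring

lemma H_up (m : ℕ) (P : Polynomial ℚ) (hP : P.natDegree ≤ m) :
    H (m + 2) P = MvPolynomial.X 1 ^ 2 * H m P := by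
  rw [H, H, Finset.sum_range_succ, Finset.sum_range_succ,
    Polynomial.coeff_eq_zero_of_natDegree_lt (by omega),
    Polynomial.coeff_eq_zero_of_natDegree_lt (by omega)]
  simp only [map_zero, zero_mul, add_zero]
  rw [Finset.mul_sum]
  refine Finset.sum_congr rfl fun k hk => ?_
  have : m + 2 - k = (m - k) + 2 := by
    have := Finset.mem_range.mp hk; omega
  rw [this, pow_add]
  ring

lemma homog_rec (n : ℕ) : ((n : ℚ) + 2) • homog (n + 2)
    = (2 * (n : ℚ) + 3) • (MvPolynomial.X 0 * homog (n + 1))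
      - ((n : ℚ) + 1) • (MvPolynomial.X 1 ^ 2 * homog n) := by
  have key : ((n : ℚ) + 2) • Leg (n + 2)
      = (2 * (n : ℚ) + 3) • (Polynomial.X * Leg (n + 1)) - ((n : ℚ) + 1) • Leg n := by
    rw [Leg, Polynomial.smul_eq_C_mul, ← mul_assoc, ← map_mul,
      mul_inv_cancel₀ (by positivity : (n : ℚ) + 2 ≠ 0), map_one, one_mul]
  have h2 := congrArg (H (n + 2)) key
  rw [H_smul, H_sub, H_smul, H_smul, H_X_mul (n + 1) (Leg (n + 1)),
    H_up n (Leg n) (Leg_natDegree n)] at h2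
  rw [homog_eq, homog_eq, homog_eq, MvPolynomial.smul_eq_C_mul,
    MvPolynomial.smul_eq_C_mul, MvPolynomial.smul_eq_C_mul]
  exact h2

open MvPolynomial

lemma eval_aeval (f : Fin 2 → S) (x : Fin 2 → ℚ) (P : S) :
    eval x (aeval f P) = eval (fun i => eval x (f i)) P := by
  induction P using MvPolynomial.induction_on with
  | C a => simp
  | add p q hp hq => rw [map_add, map_add, hp, hq, map_add]
  | mul_X p i hp => rw [map_mul, map_mul, hp, aeval_X, map_mul, eval_X]

lemma polyeval_aeval (g : Fin 2 → Polynomial ℚ) (s : ℚ) (P : S) :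
    Polynomial.eval s (aeval g P) = eval (fun i => Polynomial.eval s (g i)) P := by
  induction P using MvPolynomial.induction_on with
  | C a => simp
  | add p q hp hq => rw [map_add, Polynomial.eval_add, hp, hq, map_add]
  | mul_X p i hp => rw [map_mul, Polynomial.eval_mul, hp, aeval_X, map_mul, eval_X]

def sqh : S →ₐ[ℚ] S :=
  aeval (fun i : Fin 2 => if i = 0 then (X 0 : S) else X 1 ^ 2)

lemma sqh_inj : Function.Injective sqh := by
  intro P Q h
  rw [← sub_eq_zero, ← map_sub] at h
  rw [← sub_eq_zero]
  set R := P - Q with hR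
  apply MvPolynomial.funext
  intro x
  rw [map_zero]
  set ρ : S →ₐ[ℚ] Polynomial ℚ :=
    aeval (fun i : Fin 2 => if i = 0 then Polynomial.C (x 0) else Polynomial.X) with hρ
  have hroots : ∀ s : ℚ, Polynomial.eval (s ^ 2) (ρ R) = 0 := by
    intro s
    rw [hρ, polyeval_aeval]
    have h2 := congrArg (eval (fun i : Fin 2 => if i = 0 then x 0 else s)) h
    rw [sqh, eval_aeval, map_zero] at h2
    have e1 : (fun i : Fin 2 => (eval fun j : Fin 2 => if j = 0 then x 0 else s)
        (if i = 0 then (X 0 : S) else X 1 ^ 2)) = fun i : Fin 2 => if i = 0 then x 0 else s ^ 2 := by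
      funext i; fin_cases i <;> simp
    rw [e1] at h2
    have e2 : (fun i : Fin 2 => Polynomial.eval (s ^ 2)
        (if i = 0 then Polynomial.C (x 0) else Polynomial.X))
        = fun i : Fin 2 => if i = 0 then x 0 else s ^ 2 := by
      funext i; fin_cases i <;> simp
    rw [e2]
    exact h2
  have hzero : ρ R = 0 := by
    apply Polynomial.eq_zero_of_infinite_isRoot
    apply Set.infinite_of_injective_forall_mem
      (f := fun m : ℕ => ((m : ℚ)) ^ 2)
    · intro a b hab
      simp only at hab
      have h2 : ((a:ℚ) - b) * ((a:ℚ) + b) = 0 := by ring_nf; linear_combination hab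
      rcases mul_eq_zero.mp h2 with h3 | h3
      · exact_mod_cast sub_eq_zero.mp h3
      · have : ((a + b : ℕ) : ℚ) = 0 := by push_cast; linarith
        have hab0 : a + b = 0 := by exact_mod_cast this
        omega
    · intro m
      exact hroots (m : ℚ)
  have := congrArg (Polynomial.eval (x 1)) hzero
  rw [hρ, polyeval_aeval, Polynomial.eval_zero] at this
  have e3 : (fun i : Fin 2 => Polynomial.eval (x 1)
      (if i = 0 then Polynomial.C (x 0) else Polynomial.X)) = x := by
    funext i; fin_cases i <;> simp
  rw [e3] at this
  exact this

def uu : S →ₐ[ℚ] S :=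
  aeval (fun i : Fin 2 => if i = 0 then (X 0 : S) else (1/4 : ℚ) • (X 0 ^ 2 - X 1))

def uu' : S →ₐ[ℚ] S :=
  aeval (fun i : Fin 2 => if i = 0 then (X 0 : S) else X 0 ^ 2 - (4 : ℚ) • X 1)

lemma uu'_uu (P : S) : uu' (uu P) = P := by
  have : uu'.comp uu = AlgHom.id ℚ S := by
    apply MvPolynomial.algHom_ext
    intro i
    fin_cases i
    · simp [uu, uu']
    · simp only [AlgHom.comp_apply, uu, uu', aeval_X]
      rw [if_neg (by decide), map_smul, map_sub, map_pow, aeval_X, aeval_X,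
        if_pos rfl, if_neg (by decide)]
      rw [smul_sub, smul_sub]
      rw [smul_smul]
      norm_num
  exact congrArg (fun f => f P) (congrArg DFunLike.coe this) |>.trans rfl

def th : S →ₐ[ℚ] S := sqh.comp uu

lemma th_inj : Function.Injective th := by
  intro P Q h
  have h2 : uu P = uu Q := sqh_inj h
  have := congrArg uu' h2
  rwa [uu'_uu, uu'_uu] at this

lemma th_v : th v = X 0 := by
  simp [th, sqh, uu, v]

lemma th_w : th w = (1/4 : ℚ) • (X 0 ^ 2 - X 1 ^ 2) := by
  simp only [th, AlgHom.comp_apply, uu, sqh, w, aeval_X]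
  rw [if_neg (by decide), map_smul, map_sub, map_pow, aeval_X, aeval_X,
    if_pos rfl, if_neg (by decide)]

lemma homog_zero : homog 0 = 1 := by
  simp [homog, Leg]

lemma homog_one : homog 1 = X 0 := by
  simp [homog, Leg, Finset.sum_range_succ]

lemma C_cast (m : ℕ) : (MvPolynomial.C ((m : ℚ)) : S) = (m : S) := by
  simp

lemma th_main : ∀ n : ℕ, th (p n) = homog n ∧ th (p (n + 1)) = homog (n + 1) := by
  intro n
  induction n with
  | zero =>
    constructor
    · rw [p_zero, map_one, homog_zero]
    · rw [p_one, th_v, homog_one]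
  | succ n ih =>
    refine ⟨ih.2, ?_⟩
    have hG := congrArg th (Grec n)
    simp only [map_mul, map_sub, map_add, map_pow, map_natCast, map_ofNat, map_one,
      th_v, th_w, ih.1, ih.2] at hG
    have h44 : (4 : S) * ((1/4 : ℚ) • ((X 0 : S) ^ 2 - X 1 ^ 2)) = (X 0 : S) ^ 2 - X 1 ^ 2 := by
      rw [mul_smul_comm, smul_eq_C_mul, ← mul_assoc,
        show (MvPolynomial.C ((1:ℚ)/4) * (4 : S)) = 1 from by
          rw [← map_ofNat (MvPolynomial.C : ℚ →+* S) 4, ← map_mul]; norm_num,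
        one_mul]
    rw [h44, show ((X 0 : S) ^ 2 - ((X 0 : S) ^ 2 - X 1 ^ 2)) = (X 1 : S) ^ 2 from by ring] at hG
    have hrec := homog_rec n
    rw [smul_eq_C_mul, smul_eq_C_mul, smul_eq_C_mul] at hrec
    have hc2 : (MvPolynomial.C ((n : ℚ) + 2) : S) = (n : S) + 2 := by
      rw [map_add, map_natCast, map_ofNat]
    have hc3 : (MvPolynomial.C (2 * (n : ℚ) + 3) : S) = 2 * (n : S) + 3 := by
      rw [map_add, map_mul, map_natCast, map_ofNat, map_ofNat]
    have hc1 : (MvPolynomial.C ((n : ℚ) + 1) : S) = (n : S) + 1 := by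
      rw [map_add, map_natCast, map_one]
    rw [hc2, hc3, hc1] at hrec
    have hne : ((n : S) + 2) ≠ 0 := by
      rw [← hc2]
      intro hh
      have h0 := MvPolynomial.C_injective (Fin 2) ℚ (hh.trans (MvPolynomial.C_0).symm)
      have : (0:ℚ) < (n:ℚ) + 2 := by positivity
      exact this.ne' h0
    apply mul_left_cancel₀ hne
    rw [hrec]
    exact hG

/-- For any polynomial `P̂ ∈ ℚ[x,y]` satisfying the characterizing property
`P̂(x, y²) = yⁿ·Pₙ(x/y)` of the statement, we have `pₙ = P̂(v, v² − 4w)`. -/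
theorem dispersionless_hamiltonian_eq_legendre (n : ℕ) (Phat : MvPolynomial (Fin 2) ℚ)
    (hPhat : MvPolynomial.aeval
        (fun i : Fin 2 => if i = 0 then (MvPolynomial.X 0 : MvPolynomial (Fin 2) ℚ)
          else MvPolynomial.X 1 ^ 2) Phat = homog n) :
    p n = MvPolynomial.aeval (fun i : Fin 2 => if i = 0 then v else v ^ 2 - 4 • w) Phat := by
  apply th_inj
  rw [(th_main n).1]
  rw [MvPolynomial.comp_aeval_apply (f := fun i : Fin 2 => if i = 0 then v else v ^ 2 - 4 • w) th Phat]
  have hgen : (fun i : Fin 2 => th (if i = 0 then v else v ^ 2 - 4 • w))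
      = (fun i : Fin 2 => if i = 0 then (X 0 : S) else X 1 ^ 2) := by
    funext i
    fin_cases i
    · show th (if (0 : Fin 2) = 0 then v else v ^ 2 - 4 • w)
        = if (0 : Fin 2) = 0 then (X 0 : S) else X 1 ^ 2
      rw [if_pos rfl, if_pos rfl]
      exact th_v
    · show th (if (1 : Fin 2) = 0 then v else v ^ 2 - 4 • w)
        = if (1 : Fin 2) = 0 then (X 0 : S) else X 1 ^ 2
      rw [if_neg (by decide), if_neg (by decide), map_sub, map_pow, th_v]
      rw [show th (4 • w) = (4 : ℕ) • th w from map_nsmul th 4 w, th_w]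
      rw [← Nat.cast_smul_eq_nsmul ℚ, smul_smul]
      norm_num
  rw [hgen]
  exact hPhat.symm

end
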